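/- Let m ∈ ℕ (m ≥ 1), [a,b] ⊂ ℝ, 0 < α < 1, n ∈ ℕ with n^{1−α} > 2 and ⌈na⌉ ≤ ⌊nb⌋, and let j ∈ ℕ, j ≥ 1. Then for every x ∈ [a,b], |∑_{k=⌈na⌉}^{⌊nb⌋} Φ(nx − k)(k/n − x)^j| ≤ 1/n^{αj} + (b−a)^j/(4m(n^{1−α} − 2)^{2m}). -/

import Mathlib

open scoped BigOperators
open Real Filter

/-- The algebraic sigmoid function `φ(x) = x / (1 + x^(2m))^(1/(2m))`. -/
noncomputable def phi (m : ℕ) (x : ℝ) : ℝ :=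
  x / (1 + x ^ (2 * m)) ^ ((1 : ℝ) / (2 * m))

/-- The activation function `Φ(x) = (φ(x+1) - φ(x-1))/4`. -/
noncomputable def Phi (m : ℕ) (x : ℝ) : ℝ :=
  (phi m (x + 1) - phi m (x - 1)) / 4

/-!
The weights telescope: `Φ(y - k) = (G(y - k) - G(y - k - 1)) / 4` with `G t = φ(t + 1) + φ(t)`
increasing and valued in `[-2, 2]`. Hence the weights `Φ(n x - k)` are nonnegative, sum to at
most `1` over any set of nodes, and over the nodes with `k ≥ n x + T` (or `k ≤ n x - T`) to at most
`(1 - φ(T - 1)) / 2 ≤ 1 / (4 m (T - 1)^(2m))`, the last step by Bernoulli's inequality.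
With `T = n^(1-α)`, nodes with `|k - n x| ≤ T` satisfy `|k/n - x| ≤ n^(-α)`; the others lie in
`[a, x]` or in `[x, b]`, and `(x - a)^j + (b - x)^j ≤ (b - a)^j`.
-/

open Finset

lemma sum_mul_le_mul {ι : Type*} (s : Finset ι) {w g : ι → ℝ} {W D : ℝ}
    (hw : ∀ i ∈ s, 0 ≤ w i) (hg : ∀ i ∈ s, g i ≤ D) (hD : 0 ≤ D) (hW : ∑ i ∈ s, w i ≤ W) :
    ∑ i ∈ s, w i * g i ≤ W * D :=
  calc ∑ i ∈ s, w i * g i ≤ ∑ i ∈ s, w i * D :=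
        sum_le_sum fun i hi => mul_le_mul_of_nonneg_left (hg i hi) (hw i hi)
    _ = (∑ i ∈ s, w i) * D := (sum_mul s w D).symm
    _ ≤ W * D := mul_le_mul_of_nonneg_right hW hD

section

variable {m : ℕ}

lemma one_add_pow_two_mul_pos (m : ℕ) (x : ℝ) : 0 < 1 + x ^ (2 * m) := by
  have := (even_two_mul m).pow_nonneg x
  linarith

lemma sigmoid_denom_pos (m : ℕ) (x : ℝ) : 0 < (1 + x ^ (2 * m)) ^ ((1 : ℝ) / (2 * m)) :=
  rpow_pos_of_pos (one_add_pow_two_mul_pos m x) _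

lemma sigmoid_denom_pow (hm : m ≠ 0) (x : ℝ) :
    ((1 + x ^ (2 * m)) ^ ((1 : ℝ) / (2 * m))) ^ (2 * m) = 1 + x ^ (2 * m) := by
  have h : (1 : ℝ) / (2 * m) = ((2 * m : ℕ) : ℝ)⁻¹ := by push_cast; exact one_div _
  rw [h, rpow_inv_natCast_pow (one_add_pow_two_mul_pos m x).le (by omega)]

lemma abs_le_sigmoid_denom (hm : m ≠ 0) (x : ℝ) :
    |x| ≤ (1 + x ^ (2 * m)) ^ ((1 : ℝ) / (2 * m)) := by
  refine le_of_pow_le_pow_left₀ (n := 2 * m) (by omega) (sigmoid_denom_pos m x).le ?_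
  rw [sigmoid_denom_pow hm, (even_two_mul m).pow_abs]
  linarith

lemma phi_neg (m : ℕ) (x : ℝ) : phi m (-x) = -phi m x := by
  rw [phi, phi, (even_two_mul m).neg_pow, neg_div]

lemma phi_nonneg (m : ℕ) {x : ℝ} (hx : 0 ≤ x) : 0 ≤ phi m x :=
  div_nonneg hx (sigmoid_denom_pos m x).le

lemma abs_phi_le_one (hm : m ≠ 0) (x : ℝ) : |phi m x| ≤ 1 := by
  rw [phi, abs_div, abs_of_pos (sigmoid_denom_pos m x)]
  exact div_le_one_of_le₀ (abs_le_sigmoid_denom hm x) (sigmoid_denom_pos m x).le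

lemma phi_pow_two_mul (hm : m ≠ 0) (x : ℝ) :
    phi m x ^ (2 * m) = x ^ (2 * m) / (1 + x ^ (2 * m)) := by
  rw [phi, div_pow, sigmoid_denom_pow hm]

lemma phi_monotone (hm : m ≠ 0) : Monotone (phi m) := by
  refine monotone_of_odd_of_monotoneOn_nonneg (phi_neg m) fun s hs t ht hst => ?_
  refine (pow_le_pow_iff_left₀ (phi_nonneg m hs) (phi_nonneg m ht) (by omega : 2 * m ≠ 0)).mp ?_
  rw [phi_pow_two_mul hm, phi_pow_two_mul hm,
    div_le_div_iff₀ (one_add_pow_two_mul_pos m s) (one_add_pow_two_mul_pos m t)]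
  nlinarith [pow_le_pow_left₀ hs hst (2 * m)]

lemma one_sub_phi_le (hm : m ≠ 0) {t : ℝ} (ht : 0 < t) :
    1 - phi m t ≤ 1 / (2 * m * t ^ (2 * m)) := by
  set c := (1 + t ^ (2 * m)) ^ ((1 : ℝ) / (2 * m)) with hc
  have hc0 : 0 < c := sigmoid_denom_pos m t
  have htc : t ≤ c := (le_abs_self t).trans (abs_le_sigmoid_denom hm t)
  -- Bernoulli: `t ^ (2m) + 2m t ^ (2m - 1) (c - t) ≤ c ^ (2m) = 1 + t ^ (2m)`
  have hbern : (2 * m : ℕ) * t ^ (2 * m - 1) * (c - t) ≤ 1 := by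
    have := pow_add_mul_le_add_pow (b := c - t) ht.le (by linarith) (2 * m)
    rw [add_sub_cancel, hc, sigmoid_denom_pow hm] at this
    linarith
  have htpow : t ^ (2 * m) = t * t ^ (2 * m - 1) := by
    rw [← pow_succ']; congr 1; omega
  calc 1 - phi m t = (c - t) / c := by rw [phi, ← hc]; field_simp
    _ ≤ (c - t) / t := div_le_div_of_nonneg_left (by linarith) ht htc
    _ ≤ 1 / (2 * m * t ^ (2 * m)) := by
      rw [div_le_div_iff₀ ht (by positivity), htpow]
      push_cast at hbern
      nlinarith

lemma Phi_nonneg (hm : m ≠ 0) (x : ℝ) : 0 ≤ Phi m x := by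
  have := phi_monotone hm (show x - 1 ≤ x + 1 by linarith)
  rw [Phi]
  linarith

lemma Phi_neg (m : ℕ) (x : ℝ) : Phi m (-x) = Phi m x := by
  rw [Phi, Phi, show -x + 1 = -(x - 1) by ring, show -x - 1 = -(x + 1) by ring,
    phi_neg, phi_neg]
  ring

lemma sum_Icc_Phi (m : ℕ) (y : ℝ) {K M : ℤ} (hKM : K ≤ M) :
    ∑ k ∈ Icc K M, Phi m (y - k) =
      (phi m (y - K + 1) + phi m (y - K) - phi m (y - M) - phi m (y - M - 1)) / 4 := by
  induction M, hKM using Int.leInduction with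
  | base => simp only [Icc_self, sum_singleton, Phi]; ring_nf
  | succ M hKM ih =>
    have hins : Icc K (M + 1) = insert (M + 1) (Icc K M) := by
      ext k; simp only [mem_Icc, mem_insert]; omega
    rw [hins, sum_insert (by simp), ih, Phi]
    push_cast
    ring_nf

lemma sum_Phi_le_of_subset_Icc (hm : m ≠ 0) (y : ℝ) {S : Finset ℤ} {K M : ℤ} (hKM : K ≤ M)
    (hS : S ⊆ Icc K M) :
    ∑ k ∈ S, Phi m (y - k) ≤
      (phi m (y - K + 1) + phi m (y - K) - phi m (y - M) - phi m (y - M - 1)) / 4 :=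
  (sum_le_sum_of_subset_of_nonneg hS fun _ _ _ => Phi_nonneg hm _).trans_eq
    (sum_Icc_Phi m y hKM)

lemma subset_Icc_min'_max' {S : Finset ℤ} (hS : S.Nonempty) :
    S ⊆ Icc (S.min' hS) (S.max' hS) :=
  fun k hk => mem_Icc.2 ⟨S.min'_le k hk, S.le_max' k hk⟩

lemma sum_Phi_le_one (hm : m ≠ 0) (y : ℝ) (S : Finset ℤ) : ∑ k ∈ S, Phi m (y - k) ≤ 1 := by
  rcases S.eq_empty_or_nonempty with rfl | hS
  · simp
  refine (sum_Phi_le_of_subset_Icc hm y (S.min'_le_max' hS) (subset_Icc_min'_max' hS)).trans ?_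
  have h := fun x => abs_le.mp (abs_phi_le_one hm x)
  linarith [(h (y - S.min' hS + 1)).2, (h (y - S.min' hS)).2, (h (y - S.max' hS)).1,
    (h (y - S.max' hS - 1)).1]

lemma sum_Phi_le_of_forall_add_le (hm : m ≠ 0) (y T : ℝ) (S : Finset ℤ)
    (hS : ∀ k ∈ S, y + T ≤ k) :
    ∑ k ∈ S, Phi m (y - k) ≤ (1 - phi m (T - 1)) / 2 := by
  have hphi := fun x => abs_le.mp (abs_phi_le_one hm x)
  rcases S.eq_empty_or_nonempty with rfl | hne
  · simp only [sum_empty]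
    linarith [(hphi (T - 1)).2]
  refine (sum_Phi_le_of_subset_Icc hm y (S.min'_le_max' hne) (subset_Icc_min'_max' hne)).trans ?_
  have hmin := hS _ (S.min'_mem hne)
  have h1 : phi m (y - S.min' hne + 1) ≤ phi m (-(T - 1)) := phi_monotone hm (by linarith)
  have h2 : phi m (y - S.min' hne) ≤ phi m (-(T - 1)) := phi_monotone hm (by linarith)
  rw [phi_neg] at h1 h2
  linarith [(hphi (y - S.max' hne)).1, (hphi (y - S.max' hne - 1)).1]

lemma sum_Phi_le_of_forall_le_sub (hm : m ≠ 0) (y T : ℝ) (S : Finset ℤ)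
    (hS : ∀ k ∈ S, k ≤ y - T) :
    ∑ k ∈ S, Phi m (y - k) ≤ (1 - phi m (T - 1)) / 2 := by
  have h := sum_Phi_le_of_forall_add_le hm (-y) T (S.map (Equiv.neg ℤ).toEmbedding) (by
    simp only [mem_map_equiv, Equiv.neg_symm, Equiv.neg_apply]
    exact fun k hk => by linarith [hS _ hk, (Int.cast_neg k : ((-k : ℤ) : ℝ) = -k)])
  rw [sum_map] at h
  convert h using 2 with k
  simp only [Equiv.toEmbedding_apply, Equiv.neg_apply, Int.cast_neg, ← Phi_neg m (y - k)]
  ring_nf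

lemma sum_Phi_mul_abs_pow_le (hm : m ≠ 0) {n a b x T : ℝ} (hn : 0 < n) (hT : 0 ≤ T)
    (hax : a ≤ x) (hxb : x ≤ b) (I : Finset ℤ) (hI : ∀ k ∈ I, a ≤ k / n ∧ k / n ≤ b) (j : ℕ) :
    ∑ k ∈ I, Phi m (n * x - k) * |k / n - x| ^ j ≤
      (T / n) ^ j + (1 - phi m (T - 1)) / 2 * ((x - a) ^ j + (b - x) ^ j) := by
  classical
  have hweighted : ∀ (S : Finset ℤ) (W D : ℝ), 0 ≤ D → ∑ k ∈ S, Phi m (n * x - k) ≤ W →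
      (∀ k ∈ S, |k / n - x| ≤ D) →
      ∑ k ∈ S, Phi m (n * x - k) * |k / n - x| ^ j ≤ W * D ^ j :=
    fun S W D hD hW hd => sum_mul_le_mul S (fun k _ => Phi_nonneg hm _)
      (fun k hk => pow_le_pow_left₀ (abs_nonneg _) (hd k hk) j) (pow_nonneg hD j) hW
  set far := I.filter fun k : ℤ => ¬|k - n * x| ≤ T
  have hfar : ∀ k ∈ far, k ∈ I ∧ (k < n * x - T ∨ n * x + T < k) := fun k hk => by
    rw [mem_filter, not_le, lt_abs] at hk
    exact ⟨hk.1, hk.2.symm.imp (fun h => by linarith) (fun h => by linarith)⟩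
  rw [← sum_filter_add_sum_filter_not I (fun k : ℤ => |k - n * x| ≤ T),
    ← sum_filter_add_sum_filter_not far (fun k : ℤ => (k : ℝ) < n * x)]
  have hnear := hweighted (I.filter fun k : ℤ => |k - n * x| ≤ T) 1 (T / n)
    (div_nonneg hT hn.le) (sum_Phi_le_one hm _ _) fun k hk => by
      rw [show (k : ℝ) / n - x = (k - n * x) / n by field_simp, abs_div, abs_of_pos hn]
      exact div_le_div_of_nonneg_right (mem_filter.1 hk).2 hn.le
  have hleft := hweighted (far.filter fun k : ℤ => (k : ℝ) < n * x) _ (x - a)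
    (sub_nonneg.2 hax)
    (sum_Phi_le_of_forall_le_sub hm _ T _ fun k hk => by
      rw [mem_filter] at hk
      rcases (hfar k hk.1).2 with h | h <;> linarith [hk.2])
    fun k hk => by
      rw [mem_filter] at hk
      have := (div_lt_iff₀ hn).2 (mul_comm n x ▸ hk.2)
      rw [abs_sub_le_iff]; constructor <;> linarith [(hI k (hfar k hk.1).1).1]
  have hright := hweighted (far.filter fun k : ℤ => ¬(k : ℝ) < n * x) _ (b - x)
    (sub_nonneg.2 hxb)
    (sum_Phi_le_of_forall_add_le hm _ T _ fun k hk => by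
      rw [mem_filter, not_lt] at hk
      rcases (hfar k hk.1).2 with h | h <;> linarith [hk.2])
    fun k hk => by
      rw [mem_filter, not_lt] at hk
      have := (le_div_iff₀ hn).2 (mul_comm n x ▸ hk.2)
      rw [abs_sub_le_iff]; constructor <;> linarith [(hI k (hfar k hk.1).1).2]
  linarith

end

theorem An_moment_bound_general (m : ℕ) (hm : 1 ≤ m) (a b : ℝ)
    (α : ℝ) (n : ℕ) (hn : 2 < (n : ℝ) ^ (1 - α))
    (j : ℕ) (hj : 1 ≤ j)
    (x : ℝ) (hx : x ∈ Set.Icc a b) :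
    |∑ k ∈ Finset.Icc ⌈(n : ℝ) * a⌉ ⌊(n : ℝ) * b⌋,
        Phi m ((n : ℝ) * x - (k : ℝ)) * ((k : ℝ) / n - x) ^ j| ≤
      1 / (n : ℝ) ^ (α * j) + (b - a) ^ j / (4 * m * ((n : ℝ) ^ (1 - α) - 2) ^ (2 * m)) := by
  obtain ⟨hax, hxb⟩ := hx
  have hm0 : m ≠ 0 := by omega
  have hn0 : (0 : ℝ) < n := by
    rcases (Nat.cast_nonneg n : (0 : ℝ) ≤ n).eq_or_lt with h | h
    · rw [← h] at hn
      linarith [zero_rpow_le_one (1 - α)]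
    · exact h
  set T := (n : ℝ) ^ (1 - α) with hT
  have hTn : (T / n) ^ j = 1 / (n : ℝ) ^ (α * j) := by
    rw [hT, ← rpow_sub_one hn0.ne', ← rpow_natCast, ← rpow_mul hn0.le, one_div,
      ← rpow_neg hn0.le]
    ring_nf
  have hI : ∀ k ∈ Icc ⌈(n : ℝ) * a⌉ ⌊(n : ℝ) * b⌋, a ≤ k / n ∧ k / n ≤ b := fun k hk => by
    rw [mem_Icc, Int.ceil_le, Int.le_floor] at hk
    exact ⟨(le_div_iff₀ hn0).2 (by linarith [hk.1]),
      (div_le_iff₀ hn0).2 (by linarith [hk.2])⟩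
  have htail : (1 - phi m (T - 1)) / 2 ≤ 1 / (4 * m * (T - 2) ^ (2 * m)) := by
    have hT2 : 0 < T - 2 := by linarith
    calc (1 - phi m (T - 1)) / 2 ≤ 1 / (2 * m * (T - 1) ^ (2 * m)) / 2 := by
          gcongr; exact one_sub_phi_le hm0 (by linarith)
      _ = 1 / (4 * m * (T - 1) ^ (2 * m)) := by ring
      _ ≤ 1 / (4 * m * (T - 2) ^ (2 * m)) := by gcongr; linarith
  have hmoment : (x - a) ^ j + (b - x) ^ j ≤ (b - a) ^ j := by
    simpa using pow_add_pow_le (sub_nonneg.2 hax) (sub_nonneg.2 hxb) (by omega : j ≠ 0)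
  calc _ ≤ ∑ k ∈ Icc ⌈(n : ℝ) * a⌉ ⌊(n : ℝ) * b⌋, Phi m (n * x - k) * |k / n - x| ^ j := by
        refine (abs_sum_le_sum_abs _ _).trans_eq (sum_congr rfl fun k _ => ?_)
        rw [abs_mul, abs_pow, abs_of_nonneg (Phi_nonneg hm0 _)]
    _ ≤ (T / n) ^ j + (1 - phi m (T - 1)) / 2 * ((x - a) ^ j + (b - x) ^ j) :=
        sum_Phi_mul_abs_pow_le hm0 hn0 (by linarith) hax hxb _ hI j
    _ ≤ _ := by
        rw [hTn, div_eq_mul_one_div ((b - a) ^ j), mul_comm ((b - a) ^ j)]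
        gcongr

theorem An_moment_bound (m : ℕ) (hm : 1 ≤ m) (a b : ℝ) (hab : a ≤ b)
    (α : ℝ) (hα0 : 0 < α) (hα1 : α < 1) (n : ℕ) (hn : 2 < (n : ℝ) ^ (1 - α))
    (hnab : ⌈(n : ℝ) * a⌉ ≤ ⌊(n : ℝ) * b⌋) (j : ℕ) (hj : 1 ≤ j)
    (x : ℝ) (hx : x ∈ Set.Icc a b) :
    |∑ k ∈ Finset.Icc ⌈(n : ℝ) * a⌉ ⌊(n : ℝ) * b⌋,
        Phi m ((n : ℝ) * x - (k : ℝ)) * ((k : ℝ) / n - x) ^ j| ≤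
      1 / (n : ℝ) ^ (α * j) + (b - a) ^ j / (4 * m * ((n : ℝ) ^ (1 - α) - 2) ^ (2 * m)) :=
  An_moment_bound_general m hm a b α n hn j hj x hx
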